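/- Let u = (u₁,u₂) : ℝ² → ℝ² be a smooth solution of the Allen–Cahn system Δu = ∇W(u) (W : ℝ² → [0,∞) smooth) with u_{1y}, u_{2y} > 0 and satisfying ½|∇u|² = W(u). Set v = (u_{1x}/u_{1y}, u_{2x}/u_{2y}). If v₂ is constant (equivalently ∇v₂ = 0), then v₁ is also constant, and u(x,y) = (U₁(c₁x + y), U₂(c₂x + y)) where U_i'' = (∂W/∂u_i)(U₁,U₂)/(c_i² + 1) for i = 1,2. -/

import Mathlib

noncomputable def pd {n : ℕ} (i : Fin n) (f : (Fin n → ℝ) → ℝ) (x : Fin n → ℝ) : ℝ :=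
  fderiv ℝ f x (Pi.single i 1)

noncomputable def lap {n : ℕ} (f : (Fin n → ℝ) → ℝ) (x : Fin n → ℝ) : ℝ :=
  ∑ j, pd j (pd j f) x

lemma pd_of_hasFDerivAt {n : ℕ} {f : (Fin n → ℝ) → ℝ} {x} {f' : (Fin n → ℝ) →L[ℝ] ℝ}
    (h : HasFDerivAt f f' x) (i : Fin n) : pd i f x = f' (Pi.single i 1) := by
  rw [pd, h.fderiv]

lemma contDiff_pd {n : ℕ} {f : (Fin n → ℝ) → ℝ} (hf : ContDiff ℝ (⊤ : ℕ∞) f) (i : Fin n) :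
    ContDiff ℝ (⊤ : ℕ∞) (pd i f) := by
  have := (ContinuousLinearMap.apply ℝ ℝ (Pi.single i 1)).contDiff.comp (hf.fderiv_right (by exact_mod_cast le_top : ((⊤ : ℕ∞) : WithTop ℕ∞) + 1 ≤ ((⊤ : ℕ∞) : WithTop ℕ∞)))
  exact this

lemma hasFDerivAt_pd' {n : ℕ} {f : (Fin n → ℝ) → ℝ} (hf : ContDiff ℝ (⊤ : ℕ∞) f) (j : Fin n)
    (x : Fin n → ℝ) :
    HasFDerivAt (pd j f)
      ((ContinuousLinearMap.apply ℝ ℝ (Pi.single j 1)).comp (fderiv ℝ (fderiv ℝ f) x)) x := by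
  have := (ContinuousLinearMap.apply ℝ ℝ (Pi.single j 1)).hasFDerivAt.comp x
    (((hf.fderiv_right (by exact_mod_cast le_top : ((⊤ : ℕ∞) : WithTop ℕ∞) + 1 ≤ ((⊤ : ℕ∞) : WithTop ℕ∞))).differentiable (by simp) x).hasFDerivAt)
  exact this

lemma pd_comm {n : ℕ} {f : (Fin n → ℝ) → ℝ} (hf : ContDiff ℝ (⊤ : ℕ∞) f) (i j : Fin n)
    (x : Fin n → ℝ) : pd i (pd j f) x = pd j (pd i f) x := by
  have h1 : ∀ a b : Fin n, pd a (pd b f) x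
      = fderiv ℝ (fderiv ℝ f) x (Pi.single a 1) (Pi.single b 1) := by
    intro a b
    rw [pd_of_hasFDerivAt (hasFDerivAt_pd' hf b x) a]
    rfl
  rw [h1, h1]
  exact (hf.contDiffAt.isSymmSndFDerivAt (by rw [minSmoothness_of_isRCLikeNormedField]; exact WithTop.coe_le_coe.mpr (le_top : ((2 : ℕ∞)) ≤ ⊤))) _ _

lemma fin2_decomp (v : Fin 2 → ℝ) : v = v 0 • (Pi.single 0 1 : Fin 2 → ℝ) + v 1 • (Pi.single 1 1 : Fin 2 → ℝ) := by
  funext i; fin_cases i <;> simp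

lemma clm_apply_fin2 (f' : (Fin 2 → ℝ) →L[ℝ] ℝ) (v : Fin 2 → ℝ) :
    f' v = v 0 * f' (Pi.single 0 1) + v 1 * f' (Pi.single 1 1) := by
  conv_lhs => rw [fin2_decomp v]
  simp

lemma hasFDerivAt_pair {u₁ u₂ : (Fin 2 → ℝ) → ℝ} (hu₁ : ContDiff ℝ (⊤ : ℕ∞) u₁)
    (hu₂ : ContDiff ℝ (⊤ : ℕ∞) u₂) (x : Fin 2 → ℝ) :
    HasFDerivAt (fun x => ![u₁ x, u₂ x])
      (ContinuousLinearMap.pi ![fderiv ℝ u₁ x, fderiv ℝ u₂ x]) x := by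
  apply hasFDerivAt_pi''
  intro i
  fin_cases i <;> simp [ContinuousLinearMap.proj_pi]
  · exact (hu₁.differentiable (by simp) x).hasFDerivAt
  · exact (hu₂.differentiable (by simp) x).hasFDerivAt

lemma pd_comp_W {Q u₁ u₂ : (Fin 2 → ℝ) → ℝ} (hQ : ContDiff ℝ (⊤ : ℕ∞) Q) (hu₁ : ContDiff ℝ (⊤ : ℕ∞) u₁)
    (hu₂ : ContDiff ℝ (⊤ : ℕ∞) u₂) (k : Fin 2) (x : Fin 2 → ℝ) :
    pd k (fun x => Q ![u₁ x, u₂ x]) x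
      = pd 0 Q ![u₁ x, u₂ x] * pd k u₁ x + pd 1 Q ![u₁ x, u₂ x] * pd k u₂ x := by
  have hg := hasFDerivAt_pair hu₁ hu₂ x
  have hWg : HasFDerivAt (fun x => Q ![u₁ x, u₂ x])
      ((fderiv ℝ Q ![u₁ x, u₂ x]).comp (ContinuousLinearMap.pi ![fderiv ℝ u₁ x, fderiv ℝ u₂ x])) x :=
    ((hQ.differentiable (by simp) _).hasFDerivAt).comp x hg
  rw [pd_of_hasFDerivAt hWg]
  have hv : (ContinuousLinearMap.pi ![fderiv ℝ u₁ x, fderiv ℝ u₂ x]) (Pi.single k 1)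
      = ![pd k u₁ x, pd k u₂ x] := by
    funext i; fin_cases i <;> simp [pd]
  simp only [ContinuousLinearMap.coe_comp', Function.comp_apply, hv]
  rw [clm_apply_fin2]
  simp [pd, mul_comm]

lemma pd_add {n : ℕ} {f g : (Fin n → ℝ) → ℝ} {x} (hf : DifferentiableAt ℝ f x)
    (hg : DifferentiableAt ℝ g x) (k : Fin n) :
    pd k (fun y => f y + g y) x = pd k f x + pd k g x := by
  simp [pd, fderiv_fun_add hf hg]

lemma pd_const_mul {n : ℕ} {f : (Fin n → ℝ) → ℝ} {x} (hf : DifferentiableAt ℝ f x)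
    (c : ℝ) (k : Fin n) :
    pd k (fun y => c * f y) x = c * pd k f x := by
  simp [pd, fderiv_const_mul hf c]

lemma pd_sq {n : ℕ} {f : (Fin n → ℝ) → ℝ} {x} (hf : DifferentiableAt ℝ f x) (k : Fin n) :
    pd k (fun y => f y ^ 2) x = 2 * f x * pd k f x := by
  have h : (fun y => f y ^ 2) = fun y => f y * f y := by funext y; ring
  rw [h, pd, fderiv_fun_mul hf hf]
  simp [pd]
  ring

lemma lap_eq (f : (Fin 2 → ℝ) → ℝ) (x : Fin 2 → ℝ) :
    lap f x = pd 0 (pd 0 f) x + pd 1 (pd 1 f) x := by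
  simp [lap, Fin.sum_univ_two]

lemma oneDim (u : (Fin 2 → ℝ) → ℝ) (hu : ContDiff ℝ (⊤ : ℕ∞) u) (c : ℝ)
    (hc : ∀ x, pd 0 u x = c * pd 1 u x) :
    ∃ U : ℝ → ℝ, (∀ x, u x = U (c * x 0 + x 1)) ∧
      (∀ x, deriv (deriv U) (c * x 0 + x 1) = pd 1 (pd 1 u) x) ∧
      (∀ x, lap u x = (c ^ 2 + 1) * pd 1 (pd 1 u) x) := by
  classical
  set e₁ : Fin 2 → ℝ := Pi.single 1 1 with he₁
  have hud : Differentiable ℝ u := hu.differentiable (by simp)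
  set U : ℝ → ℝ := fun t => u ![0, t] with hU
  have hA : ∀ x, u x = U (c * x 0 + x 1) := by
    intro x
    set w : Fin 2 → ℝ := ![-(x 0), c * x 0] with hw
    have hγ : ∀ t : ℝ, HasDerivAt (fun t : ℝ => x + t • w) w t := by
      intro t
      simpa using ((hasDerivAt_id t).smul_const w).const_add x
    have hh : ∀ t : ℝ, HasDerivAt (fun t : ℝ => u (x + t • w)) 0 t := by
      intro t
      have h1 := ((hud _).hasFDerivAt).comp_hasDerivAt t (hγ t)
      refine h1.congr_deriv (Eq.symm ?_)
      rw [clm_apply_fin2]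
      have h0 : (fderiv ℝ u (x + t • w)) (Pi.single 0 1) = pd 0 u (x + t • w) := rfl
      have h1' : (fderiv ℝ u (x + t • w)) (Pi.single 1 1) = pd 1 u (x + t • w) := rfl
      rw [h0, h1', hc]
      simp [hw]
      ring
    have hcst := is_const_of_deriv_eq_zero (f := fun t : ℝ => u (x + t • w))
      (fun t => (hh t).differentiableAt) (fun t => (hh t).deriv) 1 0
    have hpt : x + w = ![0, c * x 0 + x 1] := by
      funext i
      fin_cases i <;> simp [hw] <;> ring
    have h10 : u (x + w) = u x := by simpa using hcst
    show u x = u ![0, c * x 0 + x 1]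
    rw [← h10, hpt]
  -- the inner path and its derivative
  have hγ' : ∀ (y : Fin 2 → ℝ) (s t : ℝ),
      HasDerivAt (fun t : ℝ => y + (t - s) • e₁) e₁ t := by
    intro y s t
    simpa using (((hasDerivAt_id t).sub_const s).smul_const e₁).const_add y
  have hcoord : ∀ (y : Fin 2 → ℝ) (t : ℝ),
      c * (y + (t - (c * y 0 + y 1)) • e₁) 0 + (y + (t - (c * y 0 + y 1)) • e₁) 1 = t := by
    intro y t
    have h0 : e₁ 0 = 0 := by simp [he₁]
    have h1 : e₁ 1 = 1 := by simp [he₁]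
    simp only [Pi.add_apply, Pi.smul_apply, h0, h1, smul_eq_mul]
    ring
  have hU' : ∀ y : Fin 2 → ℝ, HasDerivAt U (pd 1 u y) (c * y 0 + y 1) := by
    intro y
    set s := c * y 0 + y 1 with hs
    have hfun : U = fun t => u (y + (t - s) • e₁) := by
      funext t
      rw [hA (y + (t - s) • e₁), hcoord y t]
    rw [hfun]
    have h1 := ((hud _).hasFDerivAt).comp_hasDerivAt s (hγ' y s s)
    have hy : y + (s - s) • e₁ = y := by simp
    rw [hy] at h1
    exact h1
  have hUd : ∀ y : Fin 2 → ℝ, deriv U (c * y 0 + y 1) = pd 1 u y :=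
    fun y => (hU' y).deriv
  have hU'' : ∀ y : Fin 2 → ℝ, HasDerivAt (deriv U) (pd 1 (pd 1 u) y) (c * y 0 + y 1) := by
    intro y
    set s := c * y 0 + y 1 with hs
    have hfun : deriv U = fun t => pd 1 u (y + (t - s) • e₁) := by
      funext t
      rw [← hUd (y + (t - s) • e₁), hcoord y t]
    rw [hfun]
    have h1 := (((contDiff_pd hu 1).differentiable (by simp) _).hasFDerivAt).comp_hasDerivAt s (hγ' y s s)
    have hy : y + (s - s) • e₁ = y := by simp
    rw [hy] at h1
    exact h1
  have hUdd : ∀ y : Fin 2 → ℝ, deriv (deriv U) (c * y 0 + y 1) = pd 1 (pd 1 u) y :=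
    fun y => (hU'' y).deriv
  refine ⟨U, hA, hUdd, ?_⟩
  intro x
  have hpd0 : pd 0 u = fun y => c * pd 1 u y := funext fun y => hc y
  have hdiff1 : ∀ k : Fin 2, DifferentiableAt ℝ (pd 1 u) x :=
    fun _ => (contDiff_pd hu 1).differentiable (by simp) x
  have h00 : pd 0 (pd 0 u) x = c * (c * pd 1 (pd 1 u) x) := by
    rw [hpd0, pd_const_mul (hdiff1 0) c 0]
    have hcomm : pd 0 (pd 1 u) x = pd 1 (pd 0 u) x := pd_comm hu 0 1 x
    rw [hcomm, hpd0, pd_const_mul (hdiff1 1) c 1]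
  rw [lap_eq, h00]
  ring

lemma pd_mul {n : ℕ} {f g : (Fin n → ℝ) → ℝ} {x} (hf : DifferentiableAt ℝ f x)
    (hg : DifferentiableAt ℝ g x) (k : Fin n) :
    pd k (fun y => f y * g y) x = f x * pd k g x + g x * pd k f x := by
  rw [pd, fderiv_fun_mul hf hg]
  simp [pd]

/-- Coordinates on `ℝ²`: `0 = x`, `1 = y`. -/
theorem stmt_17 (W : (Fin 2 → ℝ) → ℝ) (hW : ContDiff ℝ (⊤ : ℕ∞) W) (hWnonneg : ∀ q, 0 ≤ W q)
    (u₁ u₂ : (Fin 2 → ℝ) → ℝ) (hu₁ : ContDiff ℝ (⊤ : ℕ∞) u₁) (hu₂ : ContDiff ℝ (⊤ : ℕ∞) u₂)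
    (hAC₁ : ∀ x, lap u₁ x = pd 0 W ![u₁ x, u₂ x])
    (hAC₂ : ∀ x, lap u₂ x = pd 1 W ![u₁ x, u₂ x])
    (hm₁ : ∀ x, 0 < pd 1 u₁ x) (hm₂ : ∀ x, 0 < pd 1 u₂ x)
    (hequi : ∀ x, (1 / 2) * ((∑ j, (pd j u₁ x) ^ 2) + ∑ j, (pd j u₂ x) ^ 2)
        = W ![u₁ x, u₂ x])
    (v₁ v₂ : (Fin 2 → ℝ) → ℝ)
    (hv₁ : ∀ x, v₁ x = pd 0 u₁ x / pd 1 u₁ x)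
    (hv₂ : ∀ x, v₂ x = pd 0 u₂ x / pd 1 u₂ x)
    (hconst : ∃ c, ∀ x, v₂ x = c) :
    ∃ (c₁ c₂ : ℝ) (U₁ U₂ : ℝ → ℝ),
      (∀ x, v₁ x = c₁) ∧ (∀ x, v₂ x = c₂) ∧
      (∀ x, u₁ x = U₁ (c₁ * x 0 + x 1)) ∧
      (∀ x, u₂ x = U₂ (c₂ * x 0 + x 1)) ∧
      (∀ x : Fin 2 → ℝ,
        deriv (deriv U₁) (c₁ * x 0 + x 1)
          = pd 0 W ![U₁ (c₁ * x 0 + x 1), U₂ (c₂ * x 0 + x 1)] / (c₁ ^ 2 + 1)) ∧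
      (∀ x : Fin 2 → ℝ,
        deriv (deriv U₂) (c₂ * x 0 + x 1)
          = pd 1 W ![U₁ (c₁ * x 0 + x 1), U₂ (c₂ * x 0 + x 1)] / (c₂ ^ 2 + 1)) := by
  classical
  obtain ⟨c₂, hc₂⟩ := hconst
  have hne₁ : ∀ x, pd 1 u₁ x ≠ 0 := fun x => (hm₁ x).ne'
  have hne₂ : ∀ x, pd 1 u₂ x ≠ 0 := fun x => (hm₂ x).ne'
  have d₁ : ∀ (j : Fin 2) (x : Fin 2 → ℝ), DifferentiableAt ℝ (pd j u₁) x :=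
    fun j x => (contDiff_pd hu₁ j).differentiable (by simp) x
  have d₂ : ∀ (j : Fin 2) (x : Fin 2 → ℝ), DifferentiableAt ℝ (pd j u₂) x :=
    fun j x => (contDiff_pd hu₂ j).differentiable (by simp) x
  -- v₂ constant gives linear relation for u₂
  have hp2 : ∀ x, pd 0 u₂ x = c₂ * pd 1 u₂ x := by
    intro x
    have h := hc₂ x
    rw [hv₂ x, div_eq_iff (hne₂ x)] at h
    exact h
  have hfun2 : pd 0 u₂ = fun y => c₂ * pd 1 u₂ y := funext hp2
  -- numerator for v₂ vanishes
  have hnum₂ : ∀ (k : Fin 2) (x : Fin 2 → ℝ),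
      pd k (pd 0 u₂) x * pd 1 u₂ x - pd 0 u₂ x * pd k (pd 1 u₂) x = 0 := by
    intro k x
    rw [hfun2, pd_const_mul (d₂ 1 x) c₂ k]
    have hb : (fun y => c₂ * pd 1 u₂ y) x = c₂ * pd 1 u₂ x := rfl
    rw [hb]
    ring
  -- differentiated equipartition
  have dsq₁ : ∀ (j : Fin 2) (x : Fin 2 → ℝ), DifferentiableAt ℝ (fun y => pd j u₁ y ^ 2) x :=
    fun j x => (d₁ j x).pow 2
  have dsq₂ : ∀ (j : Fin 2) (x : Fin 2 → ℝ), DifferentiableAt ℝ (fun y => pd j u₂ y ^ 2) x :=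
    fun j x => (d₂ j x).pow 2
  have hFeq : (fun y => pd 0 u₁ y ^ 2 + pd 1 u₁ y ^ 2 + (pd 0 u₂ y ^ 2 + pd 1 u₂ y ^ 2))
      = fun y => 2 * W ![u₁ y, u₂ y] := by
    funext y
    have h := hequi y
    rw [Fin.sum_univ_two, Fin.sum_univ_two] at h
    linarith
  have hdiffeq : ∀ (m : Fin 2) (x : Fin 2 → ℝ),
      2 * pd 0 u₁ x * pd m (pd 0 u₁) x + 2 * pd 1 u₁ x * pd m (pd 1 u₁) x
        + (2 * pd 0 u₂ x * pd m (pd 0 u₂) x + 2 * pd 1 u₂ x * pd m (pd 1 u₂) x)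
      = 2 * (pd 0 W ![u₁ x, u₂ x] * pd m u₁ x + pd 1 W ![u₁ x, u₂ x] * pd m u₂ x) := by
    intro m x
    have hL : pd m (fun y => pd 0 u₁ y ^ 2 + pd 1 u₁ y ^ 2 + (pd 0 u₂ y ^ 2 + pd 1 u₂ y ^ 2)) x
        = 2 * pd 0 u₁ x * pd m (pd 0 u₁) x + 2 * pd 1 u₁ x * pd m (pd 1 u₁) x
          + (2 * pd 0 u₂ x * pd m (pd 0 u₂) x + 2 * pd 1 u₂ x * pd m (pd 1 u₂) x) := by
      rw [pd_add ((dsq₁ 0 x).fun_add (dsq₁ 1 x)) ((dsq₂ 0 x).fun_add (dsq₂ 1 x)) m,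
          pd_add (dsq₁ 0 x) (dsq₁ 1 x) m, pd_add (dsq₂ 0 x) (dsq₂ 1 x) m,
          pd_sq (d₁ 0 x) m, pd_sq (d₁ 1 x) m, pd_sq (d₂ 0 x) m, pd_sq (d₂ 1 x) m]
    have hWgD : DifferentiableAt ℝ (fun y => W ![u₁ y, u₂ y]) x := by
      have h : HasFDerivAt (fun y => W ![u₁ y, u₂ y])
          ((fderiv ℝ W ![u₁ x, u₂ x]).comp
            (ContinuousLinearMap.pi ![fderiv ℝ u₁ x, fderiv ℝ u₂ x])) x :=
        ((hW.differentiable (by simp) _).hasFDerivAt).comp x (hasFDerivAt_pair hu₁ hu₂ x)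
      exact h.differentiableAt
    have hR : pd m (fun y => 2 * W ![u₁ y, u₂ y]) x
        = 2 * (pd 0 W ![u₁ x, u₂ x] * pd m u₁ x + pd 1 W ![u₁ x, u₂ x] * pd m u₂ x) := by
      rw [pd_const_mul hWgD 2 m, pd_comp_W hW hu₁ hu₂ m x]
    rw [← hL, ← hR, hFeq]
  -- key identity: numerator for v₁ vanishes
  have hP1 : ∀ x, pd 0 (pd 0 u₁) x + pd 1 (pd 1 u₁) x = pd 0 W ![u₁ x, u₂ x] :=
    fun x => (lap_eq u₁ x).symm.trans (hAC₁ x)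
  have hP2 : ∀ x, pd 0 (pd 0 u₂) x + pd 1 (pd 1 u₂) x = pd 1 W ![u₁ x, u₂ x] :=
    fun x => (lap_eq u₂ x).symm.trans (hAC₂ x)
  have hkey0 : ∀ x : Fin 2 → ℝ,
      pd 0 (pd 0 u₁) x * pd 1 u₁ x - pd 0 u₁ x * pd 0 (pd 1 u₁) x = 0 := by
    intro x
    have hC1 : pd 1 (pd 0 u₁) x = pd 0 (pd 1 u₁) x := pd_comm hu₁ 1 0 x
    have hC2 : pd 1 (pd 0 u₂) x = pd 0 (pd 1 u₂) x := pd_comm hu₂ 1 0 x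
    have hE := hdiffeq 1 x
    have hN2 := hnum₂ 0 x
    linear_combination (-(1:ℝ)/2) * hE + pd 1 u₁ x * hP1 x + pd 1 u₂ x * hP2 x
      + pd 0 u₁ x * hC1 + pd 0 u₂ x * hC2 - hN2
  have hkey1 : ∀ x : Fin 2 → ℝ,
      pd 1 (pd 0 u₁) x * pd 1 u₁ x - pd 0 u₁ x * pd 1 (pd 1 u₁) x = 0 := by
    intro x
    have hC1 : pd 1 (pd 0 u₁) x = pd 0 (pd 1 u₁) x := pd_comm hu₁ 1 0 x
    have hC2 : pd 1 (pd 0 u₂) x = pd 0 (pd 1 u₂) x := pd_comm hu₂ 1 0 x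
    have hE := hdiffeq 0 x
    have hN2 := hnum₂ 1 x
    linear_combination ((1:ℝ)/2) * hE - pd 0 u₁ x * hP1 x - pd 0 u₂ x * hP2 x
      + pd 1 u₁ x * hC1 + pd 1 u₂ x * hC2 - hN2
  have hkey : ∀ (k : Fin 2) (x : Fin 2 → ℝ),
      pd k (pd 0 u₁) x * pd 1 u₁ x - pd 0 u₁ x * pd k (pd 1 u₁) x = 0 := by
    intro k x
    fin_cases k
    · exact hkey0 x
    · exact hkey1 x
  -- v₁ has vanishing partials
  have hv₁fun : v₁ = fun y => pd 0 u₁ y / pd 1 u₁ y := funext hv₁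
  have hv₁diff : Differentiable ℝ v₁ := by
    have hinv : (fun y => pd 0 u₁ y / pd 1 u₁ y) = fun y => pd 0 u₁ y * (pd 1 u₁ y)⁻¹ := by
      funext y; rw [div_eq_mul_inv]
    rw [hv₁fun, hinv]
    intro x
    exact (d₁ 0 x).mul ((d₁ 1 x).inv (hne₁ x))
  have hpdv₁ : ∀ (k : Fin 2) (x : Fin 2 → ℝ), pd k v₁ x = 0 := by
    intro k x
    have hmul : (fun y => v₁ y * pd 1 u₁ y) = pd 0 u₁ := by
      funext y
      rw [hv₁ y, div_mul_cancel₀ _ (hne₁ y)]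
    have hprod : pd k (fun y => v₁ y * pd 1 u₁ y) x
        = v₁ x * pd k (pd 1 u₁) x + pd 1 u₁ x * pd k v₁ x :=
      pd_mul (hv₁diff x) (d₁ 1 x) k
    rw [hmul] at hprod
    have ha0 : pd 0 u₁ x = v₁ x * pd 1 u₁ x := by
      rw [hv₁ x, div_mul_cancel₀ _ (hne₁ x)]
    have hk := hkey k x
    have hsq : pd 1 u₁ x ^ 2 * pd k v₁ x = 0 := by
      linear_combination hk - pd 1 u₁ x * hprod + pd k (pd 1 u₁) x * ha0
    exact (mul_eq_zero.mp hsq).resolve_left (pow_ne_zero 2 (hne₁ x))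
  have hfd0 : ∀ x, fderiv ℝ v₁ x = 0 := by
    intro x
    ext v
    rw [ContinuousLinearMap.zero_apply, clm_apply_fin2 (fderiv ℝ v₁ x) v]
    have h0 : fderiv ℝ v₁ x (Pi.single 0 1) = 0 := hpdv₁ 0 x
    have h1 : fderiv ℝ v₁ x (Pi.single 1 1) = 0 := hpdv₁ 1 x
    rw [h0, h1]; ring
  set c₁ : ℝ := v₁ 0 with hc₁def
  have hv₁c : ∀ x, v₁ x = c₁ := fun x => is_const_of_fderiv_eq_zero hv₁diff hfd0 x 0
  have hp1 : ∀ x, pd 0 u₁ x = c₁ * pd 1 u₁ x := by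
    intro x
    have h := hv₁c x
    rw [hv₁ x, div_eq_iff (hne₁ x)] at h
    exact h
  obtain ⟨U₁, hA₁, hdd₁, hlap₁⟩ := oneDim u₁ hu₁ c₁ hp1
  obtain ⟨U₂, hA₂, hdd₂, hlap₂⟩ := oneDim u₂ hu₂ c₂ hp2
  refine ⟨c₁, c₂, U₁, U₂, hv₁c, hc₂, hA₁, hA₂, ?_, ?_⟩
  · intro x
    rw [hdd₁ x, ← hA₁ x, ← hA₂ x, eq_div_iff (by positivity)]
    have h := hAC₁ x
    rw [hlap₁ x] at h
    linarith
  · intro x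
    rw [hdd₂ x, ← hA₁ x, ← hA₂ x, eq_div_iff (by positivity)]
    have h := hAC₂ x
    rw [hlap₂ x] at h
    linarith
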